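/- arXiv:2204.01923 — 2 statements merged into one kernel-verified Lean document; each statement's English description precedes it below -/
import Mathlib

section
/- Let d ≥ 2 and let G be an n-vertex d-regular graph. If G is a 2-expander, or if G is triangle-free and a 1-expander, then every A ⊆ V(G) with 2 ≤ |A| ≤ n/2 satisfies |∇(A)| ≥ 2d−2. -/
open Finset

/-- The edge boundary of a vertex set `A`: the edges of `G` with exactly one endpoint in `A`. -/
def edgeBoundary {V : Type*} [Fintype V] [DecidableEq V] (G : SimpleGraph V)
    [DecidableRel G.Adj] (A : Finset V) : Finset (Sym2 V) :=
  G.edgeFinset.filter (fun e => ∃ u v : V, e = s(u, v) ∧ u ∈ A ∧ v ∉ A)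

/-- `G` is an `η`-expander. -/
def IsExpander {V : Type*} [Fintype V] [DecidableEq V] (G : SimpleGraph V)
    [DecidableRel G.Adj] (η : ℝ) : Prop :=
  ∀ A : Finset V, (A.card : ℝ) ≤ (Fintype.card V : ℝ) / 2 →
    η * A.card ≤ ((edgeBoundary G A).card : ℝ)

/-! Write `a = #A` and let `e` count the edges inside `A`; by regularity `#∇A = d a - 2e`.
If `G` is a 2-expander then `#∇A ≥ 2a`, which suffices when `d ≤ a + 1`; otherwise the trivial
bound `2e ≤ a (a - 1)` gives `#∇A ≥ a (d - a + 1)`, a concave function of `a` equal to `2d - 2`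
at `a = 2` and at `a = d - 1`. If `G` is triangle-free and a 1-expander then `#∇A ≥ a`, which
suffices when `a ≥ 2d - 2`; otherwise Mantel's bound `4e ≤ a²` gives `#∇A ≥ a (2d - a) / 2`,
again equal to `2d - 2` at both ends `a = 2` and `a = 2d - 2`. -/

section

variable {V : Type*} [Fintype V] [DecidableEq V]

lemma IsExpander.natCast_mul_card_le {G : SimpleGraph V} [DecidableRel G.Adj] {k : ℕ}
    (hG : IsExpander G k) {A : Finset V} (hA : (#A : ℝ) ≤ Fintype.card V / 2) :
    k * #A ≤ #(edgeBoundary G A) := by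
  exact_mod_cast hG A hA

namespace SimpleGraph

variable (G : SimpleGraph V) [DecidableRel G.Adj]

lemma card_edgeBoundary_eq_sum_card_sdiff (A : Finset V) :
    #(edgeBoundary G A) = ∑ u ∈ A, #(G.neighborFinset u \ A) := by
  rw [← card_sigma]
  refine (card_bij (fun p _ => s(p.1, p.2)) ?_ ?_ ?_).symm
  · rintro ⟨u, v⟩ huv
    simp only [mem_sigma, mem_sdiff, mem_neighborFinset] at huv
    simp only [edgeBoundary, mem_filter, mem_edgeFinset, mem_edgeSet]
    exact ⟨huv.2.1, u, v, rfl, huv.1, huv.2.2⟩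
  · rintro ⟨u, v⟩ huv ⟨u', v'⟩ huv' h
    simp only [mem_sigma, mem_sdiff] at huv huv'
    rcases Sym2.eq_iff.1 h with ⟨rfl, rfl⟩ | ⟨rfl, rfl⟩
    · rfl
    · exact absurd huv.1 huv'.2.2
  · intro e he
    simp only [edgeBoundary, mem_filter, mem_edgeFinset] at he
    obtain ⟨hadj, u, v, rfl, hu, hv⟩ := he
    exact ⟨⟨u, v⟩, by simpa [hu, hv] using hadj, rfl⟩

lemma sum_card_neighborFinset_inter_add_card_le (A : Finset V) :
    ∑ u ∈ A, #(G.neighborFinset u ∩ A) + #A ≤ #A * #A := by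
  have hlt : ∀ u ∈ A, #(G.neighborFinset u ∩ A) + 1 ≤ #A := fun u hu => by
    rw [← card_erase_add_one hu]
    refine Nat.add_le_add_right (card_le_card fun v hv => ?_) 1
    rw [mem_inter, mem_neighborFinset] at hv
    exact mem_erase.2 ⟨hv.1.ne', hv.2⟩
  calc ∑ u ∈ A, #(G.neighborFinset u ∩ A) + #A
      = ∑ u ∈ A, (#(G.neighborFinset u ∩ A) + 1) := by rw [sum_add_distrib, card_eq_sum_ones]
    _ ≤ ∑ _u ∈ A, #A := sum_le_sum hlt
    _ = #A * #A := by rw [sum_const, smul_eq_mul]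

lemma degree_comap_subtype (A : Finset V) (u : A) :
    (G.comap (Function.Embedding.subtype (· ∈ A))).degree u = #(G.neighborFinset u ∩ A) := by
  rw [← card_neighborFinset_eq_degree, ← card_map (Function.Embedding.subtype (· ∈ A))]
  congr 1
  ext v
  rw [mem_map, mem_inter, mem_neighborFinset]
  constructor
  · rintro ⟨⟨w, hw⟩, hadj, rfl⟩
    exact ⟨((G.comap _).mem_neighborFinset u _).1 hadj, hw⟩
  · rintro ⟨hadj, hv⟩
    exact ⟨⟨v, hv⟩, (mem_neighborFinset _ _ _).2 hadj, rfl⟩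

variable {G}

lemma IsRegularOfDegree.card_edgeBoundary_add_sum_card_inter {d : ℕ}
    (hG : G.IsRegularOfDegree d) (A : Finset V) :
    #(edgeBoundary G A) + ∑ u ∈ A, #(G.neighborFinset u ∩ A) = d * #A := by
  rw [card_edgeBoundary_eq_sum_card_sdiff, ← sum_add_distrib, mul_comm, ← smul_eq_mul,
    ← sum_const]
  exact sum_congr rfl fun u _ => (card_sdiff_add_card_inter _ _).trans (hG u)

lemma CliqueFree.two_mul_sum_card_neighborFinset_inter_le (hG : G.CliqueFree 3)
    (A : Finset V) : 2 * ∑ u ∈ A, #(G.neighborFinset u ∩ A) ≤ #A ^ 2 := by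
  set H := G.comap (Function.Embedding.subtype (· ∈ A))
  have hH : H.CliqueFree (2 + 1) := hG.comap (Embedding.comap _ G).isContained
  have hsum : ∑ u ∈ A, #(G.neighborFinset u ∩ A) = 2 * #H.edgeFinset := by
    rw [← sum_degrees_eq_twice_card_edges, ← sum_coe_sort A]
    exact sum_congr rfl fun u _ => (G.degree_comap_subtype A u).symm
  -- Turán's bound for `r = 2`, i.e. Mantel's theorem
  have hturan := hH.card_edgeFinset_le
  have hodd : (#A % 2).choose 2 = 0 := Nat.choose_eq_zero_of_lt (Nat.mod_lt _ two_pos)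
  simp only [Fintype.card_coe, hodd] at hturan
  omega

lemma IsRegularOfDegree.two_mul_sub_two_le_card_edgeBoundary_of_two_mul_card_le {d : ℕ}
    (hG : G.IsRegularOfDegree d) {A : Finset V} (hA : 2 ≤ #A)
    (hB : 2 * #A ≤ #(edgeBoundary G A)) : 2 * d - 2 ≤ #(edgeBoundary G A) := by
  have hsum := hG.card_edgeBoundary_add_sum_card_inter A
  have hinner := G.sum_card_neighborFinset_inter_add_card_le A
  rcases le_or_gt d (#A + 1) with hd | hd
  · omega
  · have hconcave : 0 ≤ (#A - 2 : ℤ) * (d - #A - 1) := mul_nonneg (by omega) (by omega)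
    have hB' : (2 * d : ℤ) ≤ #(edgeBoundary G A) + 2 := by nlinarith
    omega

lemma IsRegularOfDegree.two_mul_sub_two_le_card_edgeBoundary_of_cliqueFree {d : ℕ}
    (hG : G.IsRegularOfDegree d) (hfree : G.CliqueFree 3) {A : Finset V} (hA : 2 ≤ #A)
    (hB : #A ≤ #(edgeBoundary G A)) : 2 * d - 2 ≤ #(edgeBoundary G A) := by
  have hsum := hG.card_edgeBoundary_add_sum_card_inter A
  have hmantel := hfree.two_mul_sum_card_neighborFinset_inter_le A
  rcases le_or_gt (2 * d) (#A + 2) with hd | hd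
  · omega
  · have hconcave : 0 ≤ (#A - 2 : ℤ) * (2 * d - #A - 2) := mul_nonneg (by omega) (by omega)
    have hB' : (2 * d : ℤ) ≤ #(edgeBoundary G A) + 2 := by nlinarith
    omega

end SimpleGraph

end

theorem stmt7 :
    ∀ (V : Type) [Fintype V] [DecidableEq V] (G : SimpleGraph V) [DecidableRel G.Adj],
    ∀ d : ℕ, 2 ≤ d → G.IsRegularOfDegree d →
      (IsExpander G 2 ∨ (G.CliqueFree 3 ∧ IsExpander G 1)) →
      ∀ A : Finset V, 2 ≤ A.card → (A.card : ℝ) ≤ (Fintype.card V : ℝ) / 2 →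
        2 * d - 2 ≤ (edgeBoundary G A).card := by
  intro V _ _ G _ d _ hreg hexp A hA hAhalf
  rcases hexp with hexp | ⟨hfree, hexp⟩
  · have hexp' : IsExpander G (2 : ℕ) := by simpa using hexp
    exact hreg.two_mul_sub_two_le_card_edgeBoundary_of_two_mul_card_le hA
      (hexp'.natCast_mul_card_le hAhalf)
  · have hexp' : IsExpander G (1 : ℕ) := by simpa using hexp
    exact hreg.two_mul_sub_two_le_card_edgeBoundary_of_cliqueFree hfree hA
      (by simpa using hexp'.natCast_mul_card_le hAhalf)
end

section
/- Let a, b, c, e be integers with 1 ≤ a ≤ c and 1 ≤ b ≤ e, let q ≥ 2 be an integer, and let β ≥ 0 be real. Then q^{−(1/a + 1/b)} · Z_{K_{a,b}}(q,β)^{1/(ab)} ≤ q^{−(1/c + 1/e)} · Z_{K_{c,e}}(q,β)^{1/(ce)}, where K_{s,t} denotes the complete bipartite graph with parts of sizes s and t. -/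
open Finset

/-- The number of monochromatic edges of `G` under the coloring `σ`. -/
def monoCount {V : Type*} [Fintype V] [DecidableEq V] (G : SimpleGraph V)
    [DecidableRel G.Adj] {k : ℕ} (σ : V → Fin k) : ℕ :=
  (G.edgeFinset.filter (fun e => ∃ u v : V, e = s(u, v) ∧ σ u = σ v)).card

/-- The Potts model partition function `Z_G(q,β)`. -/
noncomputable def pottsZ {V : Type*} [Fintype V] [DecidableEq V] (G : SimpleGraph V)
    [DecidableRel G.Adj] (q : ℕ) (β : ℝ) : ℝ :=
  ∑ σ : V → Fin q, Real.exp (β * monoCount G σ)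

/-- The complete bipartite graph `K_{a,b}`. -/
def biclique (a b : ℕ) : SimpleGraph (Fin a ⊕ Fin b) where
  Adj x y := x.isLeft ≠ y.isLeft
  symm := ⟨fun _ _ h => Ne.symm h⟩
  loopless := ⟨fun _ h => h rfl⟩

instance (a b : ℕ) : DecidableRel (biclique a b).Adj :=
  fun x y => inferInstanceAs (Decidable (x.isLeft ≠ y.isLeft))

/-!
Summing out the colours of the right-hand vertices of `K_{a,b}` one at a time gives
`Z_{K_{a,b}} = ∑_σ W(σ)^b`, the sum over colourings `σ` of the left side, where `W(σ)` is the
apex weight of `σ`. Hence `q^{-(1/a + 1/b)} Z^{1/(ab)}` is the `1/a`-th power of the `b`-th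
power mean of `W/q` under the uniform distribution on the `q^a` colourings `σ`, which increases
with `b` by Jensen's inequality. Since `K_{a,b} ≅ K_{b,a}`, it increases with `a` as well.
-/

theorem Real.rpow_arith_mean_rpow_inv_le_of_le {ι : Type*} (s : Finset ι) (w z : ι → ℝ)
    (hw : ∀ i ∈ s, 0 ≤ w i) (hw' : ∑ i ∈ s, w i = 1) (hz : ∀ i ∈ s, 0 ≤ z i)
    {p r : ℝ} (hp : 0 < p) (hpr : p ≤ r) :
    (∑ i ∈ s, w i * z i ^ p) ^ p⁻¹ ≤ (∑ i ∈ s, w i * z i ^ r) ^ r⁻¹ := by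
  have hr : 0 < r := hp.trans_le hpr
  have hM : 0 ≤ ∑ i ∈ s, w i * z i ^ p :=
    sum_nonneg fun i hi => mul_nonneg (hw i hi) (Real.rpow_nonneg (hz i hi) p)
  have jensen : (∑ i ∈ s, w i * z i ^ p) ^ (r / p) ≤ ∑ i ∈ s, w i * z i ^ r := by
    refine (Real.rpow_arith_mean_le_arith_mean_rpow s w (fun i => z i ^ p) hw hw'
      (fun i hi => Real.rpow_nonneg (hz i hi) p) ((one_le_div hp).2 hpr)).trans_eq
      (sum_congr rfl fun i hi => ?_)
    rw [← Real.rpow_mul (hz i hi), mul_div_cancel₀ _ hp.ne']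
  calc (∑ i ∈ s, w i * z i ^ p) ^ p⁻¹
      = ((∑ i ∈ s, w i * z i ^ p) ^ (r / p)) ^ r⁻¹ := by
        rw [← Real.rpow_mul hM]
        congr 1
        field_simp
    _ ≤ (∑ i ∈ s, w i * z i ^ r) ^ r⁻¹ :=
        Real.rpow_le_rpow (Real.rpow_nonneg hM _) jensen (inv_nonneg.2 hr.le)

theorem monoCount_biclique {a b q : ℕ} (σ : Fin a ⊕ Fin b → Fin q) :
    monoCount (biclique a b) σ = #{p : Fin a × Fin b | σ (.inl p.1) = σ (.inr p.2)} := by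
  unfold monoCount
  refine (card_bij (fun p _ => s(.inl p.1, .inr p.2)) ?_ ?_ ?_).symm
  · rintro ⟨i, j⟩ hij
    simp only [mem_filter, mem_univ, true_and] at hij
    simp only [mem_filter, SimpleGraph.mem_edgeFinset, SimpleGraph.mem_edgeSet]
    exact ⟨by simp [biclique], .inl i, .inr j, rfl, hij⟩
  · rintro ⟨i, j⟩ _ ⟨i', j'⟩ _ h
    simpa using h
  · intro e he
    induction e using Sym2.ind with
    | _ x y =>
      simp only [mem_filter, SimpleGraph.mem_edgeFinset, SimpleGraph.mem_edgeSet] at he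
      obtain ⟨hadj, u, w, huw, hσ⟩ := he
      have hxy : σ x = σ y := by
        rcases Sym2.eq_iff.1 huw with ⟨rfl, rfl⟩ | ⟨rfl, rfl⟩
        exacts [hσ, hσ.symm]
      change x.isLeft ≠ y.isLeft at hadj
      rcases x with i | j <;> rcases y with i' | j' <;> simp at hadj
      · exact ⟨(i, j'), by simpa using hxy, rfl⟩
      · exact ⟨(i', j), by simpa using hxy.symm, Sym2.eq_swap⟩

theorem pottsZ_biclique_comm (a b q : ℕ) (β : ℝ) :
    pottsZ (biclique a b) q β = pottsZ (biclique b a) q β := by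
  refine Fintype.sum_equiv ((Equiv.sumComm _ _).arrowCongr (Equiv.refl _)) _ _ fun σ => ?_
  rw [monoCount_biclique, monoCount_biclique]
  congr 3
  exact card_equiv (Equiv.prodComm _ _) (by simp [eq_comm])

/-- The factor contributed by a vertex joined to every vertex coloured by `σ`, once its own
colour is summed out. -/
noncomputable def apexWeight {α : Type*} [Fintype α] {q : ℕ} (β : ℝ) (σ : α → Fin q) : ℝ :=
  ∑ j : Fin q, Real.exp (β * #{i | σ i = j})

theorem apexWeight_nonneg {α : Type*} [Fintype α] {q : ℕ} (β : ℝ) (σ : α → Fin q) :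
    0 ≤ apexWeight β σ :=
  sum_nonneg fun _ _ => (Real.exp_pos _).le

theorem pottsZ_biclique_eq_sum_pow (a b q : ℕ) (β : ℝ) :
    pottsZ (biclique a b) q β = ∑ σ : Fin a → Fin q, apexWeight β σ ^ b := by
  unfold pottsZ
  rw [← (Equiv.sumArrowEquivProdArrow _ _ _).symm.sum_comp, Fintype.sum_prod_type]
  refine sum_congr rfl fun σ _ => ?_
  rw [apexWeight, Fintype.sum_pow]
  refine sum_congr rfl fun τ _ => ?_
  change Real.exp (β * monoCount _ (Sum.elim σ τ)) = _
  have hcard : #{p : Fin a × Fin b | σ p.1 = τ p.2} = ∑ j, #{i | σ i = τ j} := by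
    rw [card_filter, Fintype.sum_prod_type_right]
    simp only [card_filter]
  rw [monoCount_biclique]
  -- `simp` cannot do this: the decidability instance of the filter still mentions `Sum.elim`.
  change Real.exp (β * (#{p : Fin a × Fin b | σ p.1 = τ p.2} : ℕ)) = _
  rw [hcard, Nat.cast_sum, mul_sum, Real.exp_sum]

noncomputable def normalizedPottsZ (a b q : ℕ) (β : ℝ) : ℝ :=
  (q : ℝ) ^ (-(1 / (a : ℝ) + 1 / (b : ℝ))) * pottsZ (biclique a b) q β ^ (1 / ((a : ℝ) * b))

theorem normalizedPottsZ_comm (a b q : ℕ) (β : ℝ) :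
    normalizedPottsZ a b q β = normalizedPottsZ b a q β := by
  rw [normalizedPottsZ, normalizedPottsZ, pottsZ_biclique_comm, add_comm, mul_comm (a : ℝ)]

theorem normalizedPottsZ_eq_rpow_powerMean {a b q : ℕ} (ha : a ≠ 0) (hb : b ≠ 0) (hq : q ≠ 0)
    (β : ℝ) :
    normalizedPottsZ a b q β = ((∑ σ : Fin a → Fin q,
      ((q : ℝ) ^ a)⁻¹ * (apexWeight β σ / q) ^ (b : ℝ)) ^ (b : ℝ)⁻¹) ^ (a : ℝ)⁻¹ := by
  set M := ∑ σ : Fin a → Fin q, ((q : ℝ) ^ a)⁻¹ * (apexWeight β σ / q) ^ (b : ℝ)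
  have hq₀ : (0 : ℝ) < q := by positivity
  have hM : 0 ≤ M := sum_nonneg fun σ _ =>
    mul_nonneg (by positivity) (Real.rpow_nonneg (div_nonneg (apexWeight_nonneg β σ) hq₀.le) _)
  have hZ : pottsZ (biclique a b) q β = (q : ℝ) ^ (a + b) * M := by
    simp only [M, pottsZ_biclique_eq_sum_pow, mul_sum, Real.rpow_natCast, div_pow]
    refine sum_congr rfl fun σ _ => ?_
    field_simp
    ring
  have hexp : -(1 / (a : ℝ) + 1 / (b : ℝ)) + (a + b : ℕ) * (1 / ((a : ℝ) * b)) = 0 := by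
    push_cast
    field_simp
    ring
  rw [normalizedPottsZ, hZ, Real.mul_rpow (by positivity) hM, ← Real.rpow_natCast,
    ← Real.rpow_mul hq₀.le, ← mul_assoc, ← Real.rpow_add hq₀, hexp, Real.rpow_zero, one_mul,
    ← Real.rpow_mul hM, one_div, mul_inv, mul_comm]

theorem normalizedPottsZ_le_of_right_le {a b e q : ℕ} (ha : a ≠ 0) (hb : b ≠ 0) (hbe : b ≤ e)
    (hq : q ≠ 0) (β : ℝ) : normalizedPottsZ a b q β ≤ normalizedPottsZ a e q β := by
  rw [normalizedPottsZ_eq_rpow_powerMean ha hb hq,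
    normalizedPottsZ_eq_rpow_powerMean ha (by omega) hq]
  have hz : ∀ σ : Fin a → Fin q, 0 ≤ apexWeight β σ / q := fun σ =>
    div_nonneg (apexWeight_nonneg β σ) q.cast_nonneg
  have hw : ∑ _σ : Fin a → Fin q, ((q : ℝ) ^ a)⁻¹ = 1 := by
    simp [hq]
  refine Real.rpow_le_rpow (Real.rpow_nonneg (sum_nonneg fun σ _ => mul_nonneg (by positivity)
    (Real.rpow_nonneg (hz σ) _)) _) ?_ (by positivity)
  exact Real.rpow_arith_mean_rpow_inv_le_of_le univ _ _ (fun _ _ => by positivity) hw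
    (fun σ _ => hz σ) (by positivity) (by exact_mod_cast hbe)

theorem stmt10 :
    ∀ a b c e : ℕ, 1 ≤ a → a ≤ c → 1 ≤ b → b ≤ e →
    ∀ q : ℕ, 2 ≤ q → ∀ β : ℝ, 0 ≤ β →
      (q : ℝ) ^ (-(1 / (a : ℝ) + 1 / (b : ℝ))) *
          pottsZ (biclique a b) q β ^ (1 / ((a : ℝ) * b))
        ≤ (q : ℝ) ^ (-(1 / (c : ℝ) + 1 / (e : ℝ))) *
          pottsZ (biclique c e) q β ^ (1 / ((c : ℝ) * e)) := by
  intro a b c e ha hac hb hbe q hq β _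
  have hq₀ : q ≠ 0 := by omega
  calc normalizedPottsZ a b q β
      ≤ normalizedPottsZ a e q β := normalizedPottsZ_le_of_right_le (by omega) (by omega) hbe hq₀ β
    _ = normalizedPottsZ e a q β := normalizedPottsZ_comm a e q β
    _ ≤ normalizedPottsZ e c q β := normalizedPottsZ_le_of_right_le (by omega) (by omega) hac hq₀ β
    _ = normalizedPottsZ c e q β := normalizedPottsZ_comm e c q β
end
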